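/- Let V be a finite-dimensional subspace of functions ℝ → ℝ whose elements are continuously differentiable on [0,1], let Q be a finite-dimensional subspace of functions continuous on [0,1], and let a : ℝ → ℝ be continuous on [0,1]. Let (u_h, p_h) be a semi-discrete solution on [0,T]. Then for all 0 ≤ s ≤ t ≤ T the energy identity E_h(t) = E_h(s) − ∫ₛᵗ ∫₀¹ a(x)·u_h(r)(x)² dx dr holds, where E_h(t) = (1/2)(‖u_h(t)‖² + ‖p_h(t)‖²). In particular, if a ≥ 0 on [0,1], then E_h is monotonically decreasing on [0,T]. -/

import Mathlib

open MeasureTheory Set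

/-- The L²(0,1) inner product `(f,g) = ∫₀¹ f g dx`. -/
noncomputable def L2ip (f g : ℝ → ℝ) : ℝ := ∫ x in (0:ℝ)..1, f x * g x

/-- The squared L²(0,1) norm `‖f‖² = ∫₀¹ f² dx`. -/
noncomputable def L2nsq (f : ℝ → ℝ) : ℝ := ∫ x in (0:ℝ)..1, (f x) ^ 2

/-- The L²(0,1) norm. -/
noncomputable def L2nrm (f : ℝ → ℝ) : ℝ := Real.sqrt (L2nsq f)

/-- `t ↦ (uh t, ph t)` is a continuously differentiable map from `[0,T]` into
`V × Q` (with time derivatives `uh', ph'`) solving the Galerkin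
semi-discretization of the damped wave system:
`(∂ₜ uh, v̄) − (ph, v̄′) + (a uh, v̄) = 0` for all `v̄ ∈ V` and
`(∂ₜ ph, q̄) + (uh′, q̄) = 0` for all `q̄ ∈ Q`. -/
def IsSemiDiscreteSolution (T : ℝ) (a : ℝ → ℝ) (V Q : Submodule ℝ (ℝ → ℝ))
    (uh ph uh' ph' : ℝ → ℝ → ℝ) : Prop :=
  (∀ t ∈ Icc (0:ℝ) T, uh t ∈ V ∧ ph t ∈ Q ∧ uh' t ∈ V ∧ ph' t ∈ Q) ∧
  (∀ t ∈ Icc (0:ℝ) T, ∀ x : ℝ,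
      HasDerivAt (fun s => uh s x) (uh' t x) t ∧
      HasDerivAt (fun s => ph s x) (ph' t x) t) ∧
  (∀ x : ℝ, ContinuousOn (fun t => uh' t x) (Icc (0:ℝ) T) ∧
      ContinuousOn (fun t => ph' t x) (Icc (0:ℝ) T)) ∧
  (∀ t ∈ Icc (0:ℝ) T,
      (∀ v ∈ V, L2ip (uh' t) v - L2ip (ph t) (deriv v)
          + L2ip (fun x => a x * uh t x) v = 0) ∧
      (∀ q ∈ Q, L2ip (ph' t) q + L2ip (deriv (uh t)) q = 0))

/-!
Energy method. Testing the first equation with `v̄ = u_h(t)` and the second with `q̄ = p_h(t)`,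
the coupling terms `(p_h, u_h′)` cancel, so `E_h′(t) = -(a u_h(t), u_h(t))`, and the identity is
the fundamental theorem of calculus.

The time derivatives are only given pointwise in `x`; finite dimensionality is what turns them
into derivatives of integrals. Finitely many points `ξ` determine the elements of a
finite-dimensional space `W` of functions, so `w = G (w ∘ ξ)` on `W` for a linear `G`, and
`∫₀¹ φ w(t)²` is a continuous quadratic form in the finitely many differentiable values `w(t)(ξ_j)`.
-/

theorem Submodule.exists_finset_ker_restrict_eq_bot {K X : Type*} [Field K]
    (W : Submodule K (X → K)) [FiniteDimensional K W] :
    ∃ s : Finset X,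
      LinearMap.ker (LinearMap.pi fun x : s => (LinearMap.proj (x : X)).comp W.subtype) = ⊥ := by
  obtain ⟨s, hs⟩ :=
    Finset.exists_inf_le fun x : X => LinearMap.ker ((LinearMap.proj x).comp W.subtype)
  refine ⟨s, LinearMap.ker_eq_bot'.mpr fun w hw => Subtype.ext <| funext fun y => hs y ?_⟩
  exact Submodule.mem_finsetInf.mpr fun x hx => congrFun hw ⟨x, hx⟩

theorem intervalIntegral.integral_eq_sub_of_hasDerivWithinAt_Icc {f f' : ℝ → ℝ} {a b : ℝ}
    (hab : a ≤ b) (hf : ∀ t ∈ Icc a b, HasDerivWithinAt f (f' t) (Icc a b) t)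
    (hf' : ContinuousOn f' (Icc a b)) :
    ∫ t in a..b, f' t = f b - f a :=
  integral_eq_sub_of_hasDerivAt_of_le hab (fun t ht => (hf t ht).continuousWithinAt)
    (fun t ht => (hf t (Ioo_subset_Icc_self ht)).hasDerivAt (Icc_mem_nhds ht.1 ht.2))
    (hf'.intervalIntegrable_of_Icc hab)

section WeightedPairing

variable {W : Submodule ℝ (ℝ → ℝ)} (hW : ∀ w ∈ W, ContinuousOn w (Icc 0 1))
  {φ : ℝ → ℝ} (hφ : ContinuousOn φ (Icc 0 1))

include hW hφ in
theorem intervalIntegrable_weight_mul_mul (f g : W) :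
    IntervalIntegrable (fun x => φ x * ((f : ℝ → ℝ) x * (g : ℝ → ℝ) x)) volume 0 1 :=
  (hφ.mul ((hW f f.2).mul (hW g g.2))).intervalIntegrable_of_Icc zero_le_one

noncomputable def weightedPairing : W →ₗ[ℝ] W →ₗ[ℝ] ℝ :=
  LinearMap.mk₂ ℝ (fun f g => ∫ x in (0:ℝ)..1, φ x * ((f : ℝ → ℝ) x * (g : ℝ → ℝ) x))
    (fun f₁ f₂ g => by
      simp only [Submodule.coe_add, Pi.add_apply, add_mul, mul_add]
      exact intervalIntegral.integral_add (intervalIntegrable_weight_mul_mul hW hφ f₁ g)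
        (intervalIntegrable_weight_mul_mul hW hφ f₂ g))
    (fun c f g => by
      simp only [Submodule.coe_smul, Pi.smul_apply, smul_eq_mul,
        ← intervalIntegral.integral_const_mul]
      congr 1; ext x; ring)
    (fun f g₁ g₂ => by
      simp only [Submodule.coe_add, Pi.add_apply, mul_add]
      exact intervalIntegral.integral_add (intervalIntegrable_weight_mul_mul hW hφ f g₁)
        (intervalIntegrable_weight_mul_mul hW hφ f g₂))
    (fun c f g => by
      simp only [Submodule.coe_smul, Pi.smul_apply, smul_eq_mul,
        ← intervalIntegral.integral_const_mul]
      congr 1; ext x; ring)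

theorem weightedPairing_apply (f g : W) :
    weightedPairing hW hφ f g = ∫ x in (0:ℝ)..1, φ x * ((f : ℝ → ℝ) x * (g : ℝ → ℝ) x) :=
  rfl

include hW hφ in
theorem hasDerivWithinAt_integral_weight_mul_sq [FiniteDimensional ℝ W] {S : Set ℝ}
    {w w' : ℝ → ℝ → ℝ} (hmem : ∀ t ∈ S, w t ∈ W ∧ w' t ∈ W)
    (hderiv : ∀ t ∈ S, ∀ x, HasDerivAt (fun r => w r x) (w' t x) t) {t : ℝ} (ht : t ∈ S) :
    HasDerivWithinAt (fun r => ∫ x in (0:ℝ)..1, φ x * w r x ^ 2)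
      (2 * ∫ x in (0:ℝ)..1, φ x * (w' t x * w t x)) S t := by
  obtain ⟨s, hs⟩ := W.exists_finset_ker_restrict_eq_bot
  obtain ⟨G, hG⟩ := LinearMap.exists_leftInverse_of_injective _ hs
  have hrestrict : ∀ f (hf : f ∈ W), G (fun x : s => f x) = ⟨f, hf⟩ := fun f hf =>
    LinearMap.congr_fun hG ⟨f, hf⟩
  let B : (s → ℝ) →L[ℝ] (s → ℝ) →L[ℝ] ℝ := LinearMap.toContinuousLinearMap
    (LinearMap.toContinuousLinearMap.toLinearMap ∘ₗ (weightedPairing hW hφ).compl₁₂ G G)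
  have hB : ∀ f g (hf : f ∈ W) (hg : g ∈ W),
      B (fun x : s => f x) (fun x : s => g x) = ∫ x in (0:ℝ)..1, φ x * (f x * g x) := by
    intro f g hf hg
    simp [B, hrestrict f hf, hrestrict g hg, weightedPairing_apply]
  have hy : HasDerivAt (fun r (x : s) => w r x) (fun x : s => w' t x) t :=
    hasDerivAt_pi.mpr fun x => hderiv t ht x
  have hquad := (B.hasDerivAt_of_bilinear (fun _ => hy) (fun _ => hy)).hasDerivWithinAt (s := S)
  rw [hB _ _ (hmem t ht).1 (hmem t ht).2, hB _ _ (hmem t ht).2 (hmem t ht).1] at hquad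
  have hsq : ∀ r ∈ S,
      ∫ x in (0:ℝ)..1, φ x * w r x ^ 2 = B (fun x : s => w r x) (fun x : s => w r x) :=
    fun r hr => by simp only [hB _ _ (hmem r hr).1 (hmem r hr).1, sq]
  refine (hquad.congr hsq (hsq t ht)).congr_deriv ?_
  simp only [mul_comm (w t _) (w' t _)]
  ring

end WeightedPairing

theorem L2ip_comm (f g : ℝ → ℝ) : L2ip f g = L2ip g f := by
  simp only [L2ip, mul_comm]

noncomputable def discreteEnergy (uh ph : ℝ → ℝ → ℝ) (t : ℝ) : ℝ :=
  (1/2) * (L2nsq (uh t) + L2nsq (ph t))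

noncomputable def dampingIntegral (a : ℝ → ℝ) (uh : ℝ → ℝ → ℝ) (t : ℝ) : ℝ :=
  ∫ x in (0:ℝ)..1, a x * (uh t x) ^ 2

namespace IsSemiDiscreteSolution

variable {V Q : Submodule ℝ (ℝ → ℝ)} [FiniteDimensional ℝ V]
  (hV : ∀ v ∈ V, ContinuousOn v (Icc 0 1)) (hQ : ∀ q ∈ Q, ContinuousOn q (Icc 0 1))
  {a : ℝ → ℝ} (ha : ContinuousOn a (Icc 0 1)) {T : ℝ} {uh ph uh' ph' : ℝ → ℝ → ℝ}
  (hsol : IsSemiDiscreteSolution T a V Q uh ph uh' ph')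

include hV ha hsol in
theorem continuousOn_dampingIntegral : ContinuousOn (dampingIntegral a uh) (Icc 0 T) :=
  fun _ ht => (hasDerivWithinAt_integral_weight_mul_sq hV ha
    (fun t ht => ⟨(hsol.1 t ht).1, (hsol.1 t ht).2.2.1⟩) (fun t ht x => (hsol.2.1 t ht x).1)
    ht).continuousWithinAt

include hV hQ hsol in
theorem hasDerivWithinAt_discreteEnergy [FiniteDimensional ℝ Q] {t : ℝ} (ht : t ∈ Icc 0 T) :
    HasDerivWithinAt (discreteEnergy uh ph) (-dampingIntegral a uh t) (Icc 0 T) t := by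
  obtain ⟨hmem, hderiv, -, hweak⟩ := hsol
  have hu : HasDerivWithinAt (fun r => L2nsq (uh r)) (2 * L2ip (uh' t) (uh t)) (Icc 0 T) t := by
    simpa only [L2nsq, L2ip, one_mul] using
      hasDerivWithinAt_integral_weight_mul_sq (φ := fun _ => 1) hV continuousOn_const
        (fun t ht => ⟨(hmem t ht).1, (hmem t ht).2.2.1⟩) (fun t ht x => (hderiv t ht x).1) ht
  have hp : HasDerivWithinAt (fun r => L2nsq (ph r)) (2 * L2ip (ph' t) (ph t)) (Icc 0 T) t := by
    simpa only [L2nsq, L2ip, one_mul] using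
      hasDerivWithinAt_integral_weight_mul_sq (φ := fun _ => 1) hQ continuousOn_const
        (fun t ht => ⟨(hmem t ht).2.1, (hmem t ht).2.2.2⟩) (fun t ht x => (hderiv t ht x).2) ht
  have hu_eq := (hweak t ht).1 (uh t) (hmem t ht).1
  have hp_eq := (hweak t ht).2 (ph t) (hmem t ht).2.1
  have hdamp : L2ip (fun x => a x * uh t x) (uh t) = dampingIntegral a uh t := by
    simp only [L2ip, dampingIntegral, mul_assoc, sq]
  refine ((hu.add hp).const_mul (1/2)).congr_deriv ?_
  rw [L2ip_comm (ph t), hdamp] at hu_eq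
  linarith

include hV hQ ha hsol in
theorem discreteEnergy_eq [FiniteDimensional ℝ Q] {s t : ℝ} (hs : 0 ≤ s) (hst : s ≤ t)
    (ht : t ≤ T) :
    discreteEnergy uh ph t = discreteEnergy uh ph s - ∫ r in s..t, dampingIntegral a uh r := by
  have hsub : Icc s t ⊆ Icc 0 T := Icc_subset_Icc hs ht
  have hFTC := intervalIntegral.integral_eq_sub_of_hasDerivWithinAt_Icc hst
    (fun r hr => (hsol.hasDerivWithinAt_discreteEnergy hV hQ (hsub hr)).mono hsub)
    ((hsol.continuousOn_dampingIntegral hV ha).mono hsub).neg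
  rw [intervalIntegral.integral_neg] at hFTC
  linarith

end IsSemiDiscreteSolution

theorem stmt11_general (V Q : Submodule ℝ (ℝ → ℝ))
    (hVfd : FiniteDimensional ℝ ↥V) (hQfd : FiniteDimensional ℝ ↥Q)
    (hV : ∀ v ∈ V, ContDiffOn ℝ 1 v (Icc (0:ℝ) 1))
    (hQ : ∀ q ∈ Q, ContinuousOn q (Icc (0:ℝ) 1))
    (a : ℝ → ℝ) (ha : ContinuousOn a (Icc (0:ℝ) 1))
    (T : ℝ)
    (uh ph uh' ph' : ℝ → ℝ → ℝ)
    (hsol : IsSemiDiscreteSolution T a V Q uh ph uh' ph') :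
    (∀ s t : ℝ, 0 ≤ s → s ≤ t → t ≤ T →
      (1/2) * (L2nsq (uh t) + L2nsq (ph t))
        = (1/2) * (L2nsq (uh s) + L2nsq (ph s))
          - ∫ r in s..t, ∫ x in (0:ℝ)..1, a x * (uh r x) ^ 2) ∧
    ((∀ x ∈ Icc (0:ℝ) 1, 0 ≤ a x) →
      AntitoneOn (fun t => (1/2) * (L2nsq (uh t) + L2nsq (ph t))) (Icc (0:ℝ) T)) := by
  have hVc : ∀ v ∈ V, ContinuousOn v (Icc 0 1) := fun v hv => (hV v hv).continuousOn
  have henergy := fun s t (hs : 0 ≤ s) (hst : s ≤ t) (ht : t ≤ T) =>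
    hsol.discreteEnergy_eq hVc hQ ha hs hst ht
  refine ⟨henergy, fun ha_nonneg s hs t ht hst => ?_⟩
  have hdamping_nonneg : 0 ≤ ∫ r in s..t, dampingIntegral a uh r :=
    intervalIntegral.integral_nonneg hst fun r _ => intervalIntegral.integral_nonneg zero_le_one
      fun x hx => mul_nonneg (ha_nonneg x hx) (sq_nonneg _)
  show discreteEnergy uh ph t ≤ discreteEnergy uh ph s
  linarith [henergy s t hs.1 hst ht.2]

/-- Energy identity for the Galerkin semi-discretization:
`E_h(t) = E_h(s) − ∫ₛᵗ ∫₀¹ a u_h² dx dr`; for `a ≥ 0` the discrete energy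
decays monotonically. -/
theorem stmt11 (V Q : Submodule ℝ (ℝ → ℝ))
    (hVfd : FiniteDimensional ℝ ↥V) (hQfd : FiniteDimensional ℝ ↥Q)
    (hV : ∀ v ∈ V, ContDiffOn ℝ 1 v (Icc (0:ℝ) 1))
    (hQ : ∀ q ∈ Q, ContinuousOn q (Icc (0:ℝ) 1))
    (a : ℝ → ℝ) (ha : ContinuousOn a (Icc (0:ℝ) 1))
    (T : ℝ) (hT : 0 < T)
    (uh ph uh' ph' : ℝ → ℝ → ℝ)
    (hsol : IsSemiDiscreteSolution T a V Q uh ph uh' ph') :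
    (∀ s t : ℝ, 0 ≤ s → s ≤ t → t ≤ T →
      (1/2) * (L2nsq (uh t) + L2nsq (ph t))
        = (1/2) * (L2nsq (uh s) + L2nsq (ph s))
          - ∫ r in s..t, ∫ x in (0:ℝ)..1, a x * (uh r x) ^ 2) ∧
    ((∀ x ∈ Icc (0:ℝ) 1, 0 ≤ a x) →
      AntitoneOn (fun t => (1/2) * (L2nsq (uh t) + L2nsq (ph t))) (Icc (0:ℝ) T)) :=
  stmt11_general V Q hVfd hQfd hV hQ a ha T uh ph uh' ph' hsol
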